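/- arXiv:1401.8046 — 5 statements merged into one kernel-verified Lean document; each statement's English description precedes it below -/
import Mathlib

section
/- For all natural numbers k and m with m ≥ 2k + 1, all vertices s, t : Fin m, every binary relation E on Fin m, and every finite set F of ordered pairs of elements of Fin m with at most k elements, there exists a binary relation E' on Fin m that agrees with E on F and such that t is reachable from s under E', i.e. Relation.ReflTransGen E' s t holds. (This is the combinatorial content of the statement that the problem Reach is (2k+1, k)-uniform.) -/
/-! Only the pairs in `F` are constrained, and they mention at most `2k < m` vertices, so some
vertex `w` occurs in no pair of `F`. Adding every pair outside `F` to `E` changes nothing on `F`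
and creates the path `s → w → t`. -/

open Relation

theorem Finset.exists_forall_ne_fst_snd_of_two_mul_card_lt {V : Type*} [Fintype V] [DecidableEq V]
    (F : Finset (V × V)) (hF : 2 * F.card < Fintype.card V) :
    ∃ w, ∀ p ∈ F, p.1 ≠ w ∧ p.2 ≠ w := by
  have hcard : (F.image Prod.fst ∪ F.image Prod.snd).card < (Finset.univ : Finset V).card :=
    calc (F.image Prod.fst ∪ F.image Prod.snd).card
        ≤ (F.image Prod.fst).card + (F.image Prod.snd).card := card_union_le _ _
      _ ≤ F.card + F.card := add_le_add card_image_le card_image_le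
      _ < (Finset.univ : Finset V).card := by rw [card_univ]; omega
  obtain ⟨w, -, hw⟩ := exists_mem_notMem_of_card_lt_card hcard
  refine ⟨w, fun p hp => ⟨?_, ?_⟩⟩ <;> rintro rfl <;> simp_all

theorem Relation.reflTransGen_or_notMem_of_notMem {V : Type*} (E : V → V → Prop)
    (F : Set (V × V)) {s w t : V} (hsw : (s, w) ∉ F) (hwt : (w, t) ∉ F) :
    ReflTransGen (fun a b => E a b ∨ (a, b) ∉ F) s t :=
  .head (Or.inr hsw) (.single (Or.inr hwt))

theorem reach_uniform (k m : ℕ) (hm : 2 * k + 1 ≤ m) (s t : Fin m)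
    (E : Fin m → Fin m → Prop) (F : Finset (Fin m × Fin m)) (hF : F.card ≤ k) :
    ∃ E' : Fin m → Fin m → Prop,
      (∀ p ∈ F, (E' p.1 p.2 ↔ E p.1 p.2)) ∧ Relation.ReflTransGen E' s t := by
  obtain ⟨w, hw⟩ := F.exists_forall_ne_fst_snd_of_two_mul_card_lt
    (by simp only [Fintype.card_fin]; omega)
  refine ⟨fun a b => E a b ∨ (a, b) ∉ F, fun p hp => or_iff_left (not_not_intro hp), ?_⟩
  exact reflTransGen_or_notMem_of_notMem E F (fun h => (hw _ h).2 rfl) (fun h => (hw _ h).1 rfl)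
end

section
/- For all natural numbers k and m with m ≥ 4k + 2, every binary relation E on Fin m, and every finite set F of ordered pairs of elements of Fin m with at most k elements, there exists a binary relation E' on Fin m that agrees with E on F and that admits a Hamiltonian E'-path from 0 to m−1 (the last element of Fin m). (This is the combinatorial content of the statement that the problem HamiltonianPathBetweenZeroAndMax is uniform; the paper asserts (4k, k)-uniformity, and the bound 4k+2 makes the paper's explicit construction go through.) -/
/-!
Let `T` be the set of vertices occurring in a pair of `F`, and let `E'` agree with `E` on `T × T`
and hold on every other pair. Then every vertex outside `T` is `E'`-related to and from every
vertex, so a list is an `E'`-chain as soon as no two consecutive entries lie in `T`. Since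
`#T ≤ 2k` and `m ≥ 4k + 2`, there are enough vertices outside `T` to separate those of `T`: the
path starts at `0`, alternates between the remaining vertices outside and inside `T`, and ends at
`m - 1`. One more vertex outside `T` is needed just before `m - 1` only when `m - 1 ∈ T`, and then
one vertex fewer of `T` has to be placed.
-/

/-- A Hamiltonian `E`-path from `a` to `b`: a duplicate-free list containing every
vertex, starting at `a`, ending at `b`, with consecutive entries related by `E`. -/
def IsHamPath {V : Type*} (E : V → V → Prop) (a b : V) (l : List V) : Prop :=
  l.Nodup ∧ (∀ v : V, v ∈ l) ∧ l.head? = some a ∧ l.getLast? = some b ∧ l.Chain' E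

open Finset List

def IsUniversal {α : Type*} (R : α → α → Prop) (u : α) : Prop :=
  ∀ v, R u v ∧ R v u

section Chain

variable {α : Type*} {R : α → α → Prop}

theorem isChain_cons_append_singleton {l : List α} (hl : ∀ x ∈ l, IsUniversal R x) {c b : α}
    (hcb : l = [] → IsUniversal R c ∨ IsUniversal R b) : IsChain R (c :: (l ++ [b])) := by
  induction l generalizing c with
  | nil => exact isChain_pair.2 <| (hcb rfl).elim (fun hc => (hc b).1) (fun hb => (hb c).2)
  | cons x l ih =>
    have hx := hl x mem_cons_self
    exact isChain_cons_cons.2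
      ⟨(hx c).2, ih (fun y hy => hl y (mem_cons_of_mem x hy)) fun _ => Or.inl hx⟩

theorem isChain_cons_interleave_append_singleton {xs ys : List α}
    (hxs : ∀ x ∈ xs, IsUniversal R x) (hlen : ys.length ≤ xs.length) {c b : α}
    (hb : ys.length < xs.length ∨ IsUniversal R b) :
    IsChain R (c :: (xs.interleave ys ++ [b])) := by
  induction ys generalizing xs c with
  | nil =>
    rw [interleave_nil]
    refine isChain_cons_append_singleton hxs fun hnil => Or.inr ?_
    simpa [hnil] using hb
  | cons y ys ih =>
    obtain _ | ⟨x, xs⟩ := xs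
    · simp at hlen
    have hx := hxs x mem_cons_self
    simp only [cons_interleave, cons_append, isChain_cons_cons]
    exact ⟨(hx c).2, (hx y).1, ih (fun z hz => hxs z (mem_cons_of_mem x hz))
      (by simpa using hlen) (by simpa using hb)⟩

end Chain

section HamPath

variable {V : Type*} [Fintype V] [DecidableEq V] {R : V → V → Prop} {a b : V}

theorem isHamPath_cons_append_singleton (hab : a ≠ b) {l : List V}
    (hl : l ~ ((univ.erase a).erase b).toList) (hR : IsChain R (a :: (l ++ [b]))) :
    IsHamPath R a b (a :: (l ++ [b])) := by
  have hperm : a :: (l ++ [b]) ~ a :: b :: ((univ.erase a).erase b).toList :=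
    ((perm_append_singleton b l).trans (hl.cons b)).cons a
  refine ⟨hperm.nodup_iff.2 ?_, fun v => hperm.mem_iff.2 ?_, rfl,
    by rw [← cons_append, getLast?_concat], hR⟩
  · simp [hab, nodup_toList]
  · simp only [List.mem_cons, mem_toList, mem_erase, mem_univ]
    tauto

theorem exists_isHamPath_of_few_nonuniversal (T : Finset V) (hT : ∀ v ∉ T, IsUniversal R v)
    (hab : a ≠ b) (hcard : 2 * #T + 2 ≤ Fintype.card V) : ∃ l, IsHamPath R a b l := by
  set W := ((univ.erase a).erase b).toList with hW
  set xs := W.filter (· ∉ T)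
  set ys := W.filter (· ∈ T)
  have hxs : ∀ x ∈ xs, IsUniversal R x := fun x hx =>
    hT x (by simpa [xs] using (List.mem_filter.1 hx).2)
  have hperm : xs.interleave ys ~ W := interleave_perm_append.trans <|
    perm_append_comm.trans (by simpa [xs, ys] using filter_append_perm (· ∈ T) W)
  have hlen : xs.length + ys.length = Fintype.card V - 2 := by
    rw [← length_interleave, hperm.length_eq, hW, length_toList,
      card_erase_of_mem (by simpa using hab.symm), card_erase_of_mem (mem_univ a), card_univ]
    rfl
  have hys : ys.length ≤ #(T.erase b) := by
    rw [← toFinset_card_of_nodup ((nodup_toList _).filter _)]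
    refine card_le_card fun v hv => ?_
    simp only [mem_toFinset, List.mem_filter, mem_toList, mem_erase, decide_eq_true_eq] at hv
    exact mem_erase.2 ⟨hv.1.1, hv.2⟩
  have hcount : ys.length ≤ xs.length ∧ (b ∈ T → ys.length < xs.length) := by
    have := card_erase_le (s := T) (a := b)
    clear_value xs ys
    exact ⟨by omega, fun hb => by have := card_erase_add_one hb; omega⟩
  exact ⟨_, isHamPath_cons_append_singleton hab hperm <|
    isChain_cons_interleave_append_singleton hxs hcount.1 ((em (b ∈ T)).imp hcount.2 (hT b))⟩

end HamPath

theorem zeroMaxHP_uniform (k m : ℕ) (hm : 4 * k + 2 ≤ m)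
    (E : Fin m → Fin m → Prop) (F : Finset (Fin m × Fin m)) (hF : F.card ≤ k) :
    ∃ E' : Fin m → Fin m → Prop,
      (∀ p ∈ F, (E' p.1 p.2 ↔ E p.1 p.2)) ∧
      ∃ l : List (Fin m),
        IsHamPath E' (⟨0, by omega⟩ : Fin m) (⟨m - 1, by omega⟩ : Fin m) l := by
  set T := F.image Prod.fst ∪ F.image Prod.snd
  have hT : #T ≤ 2 * k :=
    calc #T ≤ #(F.image Prod.fst) + #(F.image Prod.snd) := card_union_le _ _
      _ ≤ #F + #F := add_le_add card_image_le card_image_le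
      _ ≤ 2 * k := by omega
  set E' : Fin m → Fin m → Prop := fun x y => x ∈ T → y ∈ T → E x y
  have huniv : ∀ v ∉ T, IsUniversal E' v :=
    fun v hv w => ⟨fun h => absurd h hv, fun _ h => absurd h hv⟩
  refine ⟨E', fun p hp => ?_, exists_isHamPath_of_few_nonuniversal T huniv
    (Fin.ne_of_val_ne (by dsimp only; omega)) (by rw [Fintype.card_fin]; omega)⟩
  have h1 : p.1 ∈ T := mem_union_left _ (mem_image_of_mem _ hp)
  have h2 : p.2 ∈ T := mem_union_right _ (mem_image_of_mem _ hp)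
  exact ⟨fun h => h h1 h2, fun h _ _ => h⟩
end

section
/- For all natural numbers k and m with m ≥ 2k + 6, every simple graph G on Fin m, and every finite set F of unordered pairs (elements of Sym2 (Fin m)) with at most k elements, there exists a simple graph G' on Fin m such that every pair e ∈ F is an edge of G' iff it is an edge of G, and such that for every 2-coloring c : Sym2 (Fin m) → Bool, G' has a monochromatic triangle under c. (This is the combinatorial content of the statement that the problem coMonoTriangle is (2k+6, k)-uniform.) -/
/-! The pairs of `F` touch at most `2k` vertices, so at least six vertices avoid them. Adding a
clique on six such vertices to `G` changes no pair of `F`, and since `R(3, 3) = 6` every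
2-colouring has a monochromatic triangle inside that clique. -/

/-- `G` has a monochromatic triangle under the 2-coloring `c`: three pairwise distinct,
pairwise adjacent vertices whose three connecting pairs receive the same color. -/
def HasMonoTriangle {V : Type*} (G : SimpleGraph V) (c : Sym2 V → Bool) : Prop :=
  ∃ x y z : V, x ≠ y ∧ y ≠ z ∧ x ≠ z ∧
    G.Adj x y ∧ G.Adj y z ∧ G.Adj x z ∧
    c s(x, y) = c s(y, z) ∧ c s(y, z) = c s(x, z)

namespace SimpleGraph

variable {V : Type*} {G : SimpleGraph V} {c : Sym2 V → Bool}

lemma hasMonoTriangle_of_adj {x y z : V} {b : Bool} (hxy : G.Adj x y) (hyz : G.Adj y z)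
    (hxz : G.Adj x z) (cxy : c s(x, y) = b) (cyz : c s(y, z) = b) (cxz : c s(x, z) = b) :
    HasMonoTriangle G c :=
  ⟨x, y, z, hxy.ne, hyz.ne, hxz.ne, hxy, hyz, hxz, cxy.trans cyz.symm, cyz.trans cxz.symm⟩

/-- Either two leaves of the star are joined in the star's colour, or the leaves span a triangle
of the other colour. -/
lemma hasMonoTriangle_of_monochromatic_star {v a b d : V} {col : Bool}
    (hva : G.Adj v a) (hvb : G.Adj v b) (hvd : G.Adj v d)
    (hab : G.Adj a b) (had : G.Adj a d) (hbd : G.Adj b d)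
    (cva : c s(v, a) = col) (cvb : c s(v, b) = col) (cvd : c s(v, d) = col) :
    HasMonoTriangle G c := by
  by_cases cab : c s(a, b) = col
  · exact hasMonoTriangle_of_adj hva hab hvb cva cab cvb
  by_cases cad : c s(a, d) = col
  · exact hasMonoTriangle_of_adj hva had hvd cva cad cvd
  by_cases cbd : c s(b, d) = col
  · exact hasMonoTriangle_of_adj hvb hbd hvd cvb cbd cvd
  exact hasMonoTriangle_of_adj hab hbd had (Bool.eq_not_of_ne cab) (Bool.eq_not_of_ne cbd)
    (Bool.eq_not_of_ne cad)

theorem IsClique.hasMonoTriangle {s : Finset V} (hs : G.IsClique (s : Set V))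
    (hcard : 6 ≤ s.card) (c : Sym2 V → Bool) : HasMonoTriangle G c := by
  classical
  obtain ⟨v, hv⟩ : s.Nonempty := Finset.card_pos.mp (by omega)
  obtain ⟨col, -, hfiber⟩ :=
    Finset.exists_lt_card_fiber_of_mul_lt_card_of_maps_to (s := s.erase v)
      (t := Finset.univ) (f := fun x => c s(v, x)) (n := 2) (fun _ _ => Finset.mem_univ _)
      (by rw [Finset.card_erase_of_mem hv, Finset.card_univ, Fintype.card_bool]; omega)
  obtain ⟨a, b, d, ha, hb, hd, hab, had, hbd⟩ := Finset.two_lt_card_iff.mp hfiber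
  simp only [Finset.mem_filter, Finset.mem_erase] at ha hb hd
  obtain ⟨⟨hav, has⟩, cva⟩ := ha
  obtain ⟨⟨hbv, hbs⟩, cvb⟩ := hb
  obtain ⟨⟨hdv, hds⟩, cvd⟩ := hd
  exact hasMonoTriangle_of_monochromatic_star (hs hv has hav.symm) (hs hv hbs hbv.symm)
    (hs hv hds hdv.symm) (hs has hbs hab) (hs has hds had) (hs hbs hds hbd) cva cvb cvd

lemma isClique_fromEdgeSet_sym2 (s : Finset V) :
    (fromEdgeSet (s.sym2 : Set (Sym2 V))).IsClique (s : Set V) :=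
  fun _ hx _ hy hxy => (fromEdgeSet_adj _).mpr ⟨Finset.mk_mem_sym2_iff.mpr ⟨hx, hy⟩, hxy⟩

end SimpleGraph

lemma Finset.exists_card_eq_forall_notMem_sym2 {V : Type*} [Fintype V] [DecidableEq V]
    (F : Finset (Sym2 V)) (n : ℕ) (hn : 2 * F.card + n ≤ Fintype.card V) :
    ∃ s : Finset V, s.card = n ∧ ∀ e ∈ F, e ∉ s.sym2 := by
  set touched := F.biUnion Sym2.toFinset
  have htouched : touched.card ≤ 2 * F.card :=
    calc touched.card ≤ ∑ e ∈ F, e.toFinset.card := Finset.card_biUnion_le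
      _ ≤ ∑ _e ∈ F, 2 := Finset.sum_le_sum fun e _ => by
          rw [Sym2.card_toFinset]; split_ifs <;> omega
      _ = 2 * F.card := by rw [Finset.sum_const, smul_eq_mul, mul_comm]
  obtain ⟨s, hs, hcard⟩ := Finset.exists_subset_card_eq (s := touchedᶜ) (n := n)
    (by rw [Finset.card_compl]; omega)
  refine ⟨s, hcard, fun e he hes => ?_⟩
  have hout : e.out.1 ∈ touched :=
    Finset.mem_biUnion.mpr ⟨e, he, Sym2.mem_toFinset.mpr (Sym2.out_fst_mem e)⟩
  exact Finset.mem_compl.mp (hs (Finset.mem_sym2_iff.mp hes _ (Sym2.out_fst_mem e))) hout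

theorem coMonoTriangle_uniform (k m : ℕ) (hm : 2 * k + 6 ≤ m)
    (G : SimpleGraph (Fin m)) (F : Finset (Sym2 (Fin m))) (hF : F.card ≤ k) :
    ∃ G' : SimpleGraph (Fin m),
      (∀ e ∈ F, (e ∈ G'.edgeSet ↔ e ∈ G.edgeSet)) ∧
      ∀ c : Sym2 (Fin m) → Bool, HasMonoTriangle G' c := by
  obtain ⟨s, hs, hsF⟩ := F.exists_card_eq_forall_notMem_sym2 6 (by rw [Fintype.card_fin]; omega)
  refine ⟨G ⊔ SimpleGraph.fromEdgeSet s.sym2, fun e he => ?_, fun c => ?_⟩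
  · simp only [SimpleGraph.edgeSet_sup, SimpleGraph.edgeSet_fromEdgeSet, Set.mem_union,
      Set.mem_sdiff, Finset.mem_coe, hsF e he, false_and, or_false]
  · exact ((SimpleGraph.isClique_fromEdgeSet_sym2 s).mono le_sup_right).hasMonoTriangle hs.ge c
end

section
/- Let m and N be natural numbers with m ≥ 1 and N ≥ 1, and let E be a binary relation on Fin m. Define the binary relation E_N on Fin m × Fin N by: E_N (a,i) (b,j) holds iff either i = j and E a b holds, or the natural number underlying j equals the natural number underlying i plus 1, a = m−1 (the last element of Fin m) and b = 0. Then E_N admits a Hamiltonian E_N-path from (0, 0) to (m−1, N−1) if and only if E admits a Hamiltonian E-path from 0 to m−1. (This is the combinatorial core of the paper's autoreduction of HamiltonianPathBetweenZeroAndMax: chaining N copies of a graph by linking the last vertex of each copy to the first vertex of the next preserves and reflects the existence of the required Hamiltonian path.) -/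
/-!
Along a Hamiltonian path of the chained relation `chainCopies E a b n` the copy index never
decreases, so the path runs through the first copy in an initial segment. That segment can only
be left through the last vertex `b`, so its first coordinates form a Hamiltonian path of `E`
from `a` to `b`. Conversely, repeating a Hamiltonian path of `E` once in every copy gives a
Hamiltonian path of the chained relation.
-/

namespace List

theorem forall_mem_dropWhile_not {α : Type*} {p : α → Bool} :
    ∀ {l : List α}, l.Pairwise (fun x y => p y → p x) → ∀ x ∈ l.dropWhile p, ¬ p x
  | [], _ => by simp
  | y :: l, h => by
    rw [pairwise_cons] at h
    by_cases hy : p y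
    · rw [dropWhile_cons_of_pos hy]
      exact forall_mem_dropWhile_not h.2
    · rw [dropWhile_cons_of_neg hy]
      rintro x (_ | ⟨_, hx⟩)
      · exact hy
      · exact mt (h.1 x hx) hy

theorem isChain_succ_finRange (n : ℕ) :
    (finRange n).IsChain fun i j : Fin n => (j : ℕ) = i + 1 := by
  rw [isChain_iff_getElem]
  simp

end List

open List

section ChainCopies

variable {V : Type*}

def chainCopies (E : V → V → Prop) (a b : V) (n : ℕ) (p q : V × Fin (n + 1)) : Prop :=
  (p.2 = q.2 ∧ E p.1 q.1) ∨ ((q.2 : ℕ) = p.2 + 1 ∧ p.1 = b ∧ q.1 = a)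

variable {E : V → V → Prop} {a b : V} {n : ℕ} {p q : V × Fin (n + 1)}

theorem chainCopies.snd_le (h : chainCopies E a b n p q) : p.2 ≤ q.2 := by
  rcases h with ⟨h, -⟩ | ⟨h, -⟩
  · exact h.le
  · exact Fin.le_iff_val_le_val.2 (by omega)

theorem chainCopies.fst_eq_of_snd_ne (h : chainCopies E a b n p q) (hne : p.2 ≠ q.2) :
    p.1 = b := by
  rcases h with ⟨h, -⟩ | ⟨-, h, -⟩
  · exact absurd h hne
  · exact h

theorem chainCopies.rel_of_snd_eq (h : chainCopies E a b n p q) (heq : p.2 = q.2) :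
    E p.1 q.1 := by
  rcases h with ⟨-, h⟩ | ⟨h, -, -⟩
  · exact h
  · exact absurd (congrArg Fin.val heq) (by omega)

theorem IsHamPath.map_fst_takeWhile {L : List (V × Fin (n + 1))}
    (hL : IsHamPath (chainCopies E a b n) (a, 0) (b, Fin.last n) L) :
    IsHamPath E a b ((L.takeWhile (·.2 = 0)).map Prod.fst) := by
  obtain ⟨hnd, hmem, hhead, hlast, hchain⟩ := hL
  set P := L.takeWhile (·.2 = 0)
  set D := L.dropWhile (·.2 = 0)
  have hPD : P ++ D = L := takeWhile_append_dropWhile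
  have hP : ∀ x ∈ P, x.2 = 0 := fun x hx => by simpa using mem_takeWhile_imp hx
  have hD : ∀ x ∈ D, x.2 ≠ 0 := by
    have hsorted : (L.map Prod.snd).Pairwise (· ≤ ·) :=
      ((isChain_map _).2 (hchain.imp fun _ _ h => h.snd_le)).pairwise
    have hmono : L.Pairwise fun x y => decide (y.2 = 0) → decide (x.2 = 0) :=
      (pairwise_map.1 hsorted).imp fun hxy hy => by
        simp only [decide_eq_true_eq] at hy ⊢
        exact le_antisymm (hy ▸ hxy) (Fin.zero_le _)
    simpa using forall_mem_dropWhile_not hmono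
  have hPhead : P.head? = some (a, 0) := by simp [P, head?_takeWhile, hhead]
  have hPne : P ≠ [] := by
    rintro h
    simp [h] at hPhead
  have hPlast : (P.getLast hPne).1 = b := by
    rcases hDe : D with _ | ⟨d, D'⟩
    · rw [hDe, append_nil] at hPD
      have h : P.getLast? = some (b, Fin.last n) := hPD ▸ hlast
      rw [getLast?_eq_some_getLast hPne, Option.some.injEq] at h
      rw [h]
    · rw [← hPD, hDe] at hchain
      refine (hchain.rel_getLast_head_of_append hPne (cons_ne_nil d D')).fst_eq_of_snd_ne ?_
      rw [hP _ (getLast_mem hPne)]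
      exact (hD d (by simp [hDe])).symm
  refine ⟨?_, fun v => ?_, ?_, ?_, ?_⟩
  · refine Nodup.map_on (fun x hx y hy hxy => Prod.ext hxy ?_) (hnd.sublist (takeWhile_sublist _))
    rw [hP x hx, hP y hy]
  · have hv : (v, 0) ∈ P ++ D := hPD ▸ hmem _
    rcases mem_append.1 hv with hv | hv
    · exact mem_map_of_mem hv
    · exact absurd rfl (hD _ hv)
  · simp [hPhead]
  · rw [getLast?_map, getLast?_eq_some_getLast hPne, Option.map_some, hPlast]
  · rw [Chain', isChain_map]
    exact (hchain.prefix (takeWhile_prefix _)).imp_of_mem_imp fun x y hx hy h =>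
      h.rel_of_snd_eq ((hP x hx).trans (hP y hy).symm)

theorem IsHamPath.flatMap_chainCopies {l : List V} (hl : IsHamPath E a b l) :
    IsHamPath (chainCopies E a b n) (a, 0) (b, Fin.last n)
      ((finRange (n + 1)).flatMap fun i => l.map (·, i)) := by
  obtain ⟨hnd, hmem, hhead, hlast, hchain⟩ := hl
  have hne : l ≠ [] := by
    rintro rfl
    simp at hhead
  refine ⟨?_, fun v => by simp [hmem], ?_, ?_, ?_⟩
  · refine nodup_flatMap.2 ⟨fun i _ => hnd.map fun _ _ h => (Prod.mk.inj h).1, ?_⟩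
    refine (nodup_finRange _).imp fun hij => disjoint_left.2 ?_
    simp only [mem_map]
    rintro _ ⟨v, -, rfl⟩ ⟨w, -, h⟩
    exact hij (Prod.mk.inj h).2.symm
  · simp [finRange_succ, head?_map, hhead]
  · simp [finRange_succ_last, getLast?_map, hlast]
  · rw [Chain', flatMap_def, isChain_flatten (by simp [hne]), isChain_map]
    refine ⟨?_, (isChain_succ_finRange _).imp fun {i j} hij => ?_⟩
    · simp only [mem_map, forall_exists_index, and_imp, forall_apply_eq_imp_iff₂, isChain_map]
      exact fun i _ => hchain.imp fun _ _ h => Or.inl ⟨rfl, h⟩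
    · simp only [getLast?_map, head?_map, hlast, hhead, Option.map_some, Option.mem_def,
        Option.some.injEq, forall_eq']
      exact Or.inr ⟨hij, rfl, rfl⟩

end ChainCopies

theorem exists_isHamPath_chainCopies_iff {V : Type*} (E : V → V → Prop) (a b : V) (n : ℕ) :
    (∃ L, IsHamPath (chainCopies E a b n) (a, 0) (b, Fin.last n) L) ↔
      ∃ l, IsHamPath E a b l :=
  ⟨fun ⟨_, hL⟩ => ⟨_, hL.map_fst_takeWhile⟩,
    fun ⟨_, hl⟩ => ⟨_, hl.flatMap_chainCopies⟩⟩

theorem zeroMaxHP_chain (m N : ℕ) (hm : 1 ≤ m) (hN : 1 ≤ N)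
    (E : Fin m → Fin m → Prop) :
    (∃ l : List (Fin m × Fin N),
        IsHamPath
          (fun p q : Fin m × Fin N =>
            (p.2 = q.2 ∧ E p.1 q.1) ∨
            ((q.2 : ℕ) = (p.2 : ℕ) + 1 ∧ p.1 = (⟨m - 1, by omega⟩ : Fin m) ∧
              q.1 = (⟨0, by omega⟩ : Fin m)))
          ((⟨0, by omega⟩ : Fin m), (⟨0, by omega⟩ : Fin N))
          ((⟨m - 1, by omega⟩ : Fin m), (⟨N - 1, by omega⟩ : Fin N)) l) ↔
    (∃ l : List (Fin m), IsHamPath E (⟨0, by omega⟩ : Fin m) (⟨m - 1, by omega⟩ : Fin m) l) := by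
  obtain ⟨n, rfl⟩ : ∃ n, N = n + 1 := ⟨N - 1, by omega⟩
  have hlast : (⟨n + 1 - 1, by omega⟩ : Fin (n + 1)) = Fin.last n := Fin.ext (by simp)
  rw [hlast]
  exact exists_isHamPath_chainCopies_iff E _ _ n
end

section
/- Let E be a binary relation on a type α, let U be a set of elements of α, and let β be any type. Define the binary relation E₂ on α ⊕ β by: E₂ (inl a) (inl a') holds iff E a a' holds, and E₂ x y is false whenever x or y lies in the right summand; define U₂ to be the image of U under inl. Then for all s, t ∈ α, AltReach E₂ U₂ (inl s) (inl t) holds if and only if AltReach E U s t holds. (This is the combinatorial core of the paper's padding autoreduction for AltReach: adding isolated existential vertices to an alternating graph preserves and reflects alternating reachability between the original vertices.) -/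
/-!
Alternating reachability only ever inspects the successors and the universality of the vertices
it passes through. Under `Sum.inl` the successors of an original vertex are exactly the images of
its old successors and its universality is unchanged, so the derivations of `AltReach` in the two
graphs correspond step by step; the new vertices are never reached from original ones.
-/

/-- Alternating reachability: the least relation `R` such that (i) `R u u`;
(ii) if `u` is existential (`u ∉ U`), `E u v` and `R v w` then `R u w`;
(iii) if `u` is universal (`u ∈ U`), `u` has at least one outgoing edge, and `R v w`
holds for every successor `v` of `u`, then `R u w`. -/
inductive AltReach {V : Type*} (E : V → V → Prop) (U : Set V) : V → V → Prop
  | refl (u : V) : AltReach E U u u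
  | exist {u v w : V} : u ∉ U → E u v → AltReach E U v w → AltReach E U u w
  | univ {u w : V} : u ∈ U → (∃ v, E u v) → (∀ v, E u v → AltReach E U v w) →
      AltReach E U u w

namespace AltReach

variable {V W : Type*} {E : V → V → Prop} {U : Set V} {E' : W → W → Prop} {U' : Set W}
  {f : V → W}

theorem map (hE : ∀ a y, E' (f a) y ↔ ∃ v, E a v ∧ f v = y) (hU : ∀ a, f a ∈ U' ↔ a ∈ U)
    {a b : V} (h : AltReach E U a b) : AltReach E' U' (f a) (f b) := by
  induction h with
  | refl u => exact refl (f u)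
  | exist hu huv _ ih => exact exist (mt (hU _).1 hu) ((hE _ _).2 ⟨_, huv, rfl⟩) ih
  | univ hu hsucc _ ih =>
    obtain ⟨v, huv⟩ := hsucc
    refine univ ((hU _).2 hu) ⟨f v, (hE _ _).2 ⟨v, huv, rfl⟩⟩ fun y hy => ?_
    obtain ⟨v', huv', rfl⟩ := (hE _ _).1 hy
    exact ih v' huv'

theorem of_map (hf : Function.Injective f) (hE : ∀ a y, E' (f a) y ↔ ∃ v, E a v ∧ f v = y)
    (hU : ∀ a, f a ∈ U' ↔ a ∈ U) {a b : V} (h : AltReach E' U' (f a) (f b)) :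
    AltReach E U a b := by
  generalize hx : f a = x at h
  generalize hy : f b = y at h
  induction h generalizing a with
  | refl u => exact hf (hx.trans hy.symm) ▸ refl a
  | exist hu huv _ ih =>
    subst hx
    obtain ⟨v, hav, rfl⟩ := (hE _ _).1 huv
    exact exist (mt (hU _).2 hu) hav (ih rfl hy)
  | univ hu hsucc _ ih =>
    subst hx
    obtain ⟨_, ⟨v, hav, rfl⟩⟩ := hsucc.imp fun _ => (hE _ _).1
    exact univ ((hU _).1 hu) ⟨v, hav⟩ fun v' hav' => ih _ ((hE _ _).2 ⟨v', hav', rfl⟩) rfl hy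

theorem map_iff (hf : Function.Injective f) (hE : ∀ a y, E' (f a) y ↔ ∃ v, E a v ∧ f v = y)
    (hU : ∀ a, f a ∈ U' ↔ a ∈ U) {a b : V} :
    AltReach E' U' (f a) (f b) ↔ AltReach E U a b :=
  ⟨of_map hf hE hU, map hE hU⟩

end AltReach

theorem altReach_padding {α β : Type*} (E : α → α → Prop) (U : Set α) (s t : α) :
    AltReach
      (fun x y : α ⊕ β =>
        match x, y with
        | Sum.inl a, Sum.inl a' => E a a'
        | _, _ => False)
      (Sum.inl '' U) (Sum.inl s) (Sum.inl t) ↔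
    AltReach E U s t := by
  refine AltReach.map_iff Sum.inl_injective (fun a y => ?_) fun _ =>
    Sum.inl_injective.mem_set_image
  cases y <;> simp
end
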